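/- Let Q, Q̂ ∈ ℝ^{n×r} and Q⊥, Q̂⊥ ∈ ℝ^{n×(n−r)} be such that [Q, Q⊥] and [Q̂, Q̂⊥] are n×n orthogonal matrices. Then max{ min over orthogonal R ∈ O(r) of ‖Q − Q̂R‖, min over orthogonal R⊥ ∈ O(n−r) of ‖Q⊥ − Q̂⊥R⊥‖ } ≤ √2·‖QᵀQ̂⊥‖, where ‖·‖ denotes the spectral norm. -/

import Mathlib

open Matrix
open scoped Kronecker

noncomputable section

/-- Euclidean norm of a vector. -/
def vnorm {I : Type*} [Fintype I] (v : I → ℝ) : ℝ := Real.sqrt (∑ i, v i ^ 2)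

/-- Frobenius norm of a matrix. -/
def frobNorm {I J : Type*} [Fintype I] [Fintype J] (A : Matrix I J ℝ) : ℝ :=
  Real.sqrt (∑ i, ∑ j, A i j ^ 2)

/-- Spectral norm (ℓ₂ operator norm) of a matrix. -/
def specNorm {I J : Type*} [Fintype I] [Fintype J] (A : Matrix I J ℝ) : ℝ :=
  sSup {c | ∃ v : J → ℝ, vnorm v ≤ 1 ∧ c = vnorm (A *ᵥ v)}

/-- Largest (real) eigenvalue of a square matrix. -/
def lmax {I : Type*} [Fintype I] (A : Matrix I I ℝ) : ℝ :=
  sSup {t | ∃ v : I → ℝ, v ≠ 0 ∧ A *ᵥ v = t • v}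

/-- Smallest (real) eigenvalue of a square matrix. -/
def lmin {I : Type*} [Fintype I] (A : Matrix I I ℝ) : ℝ :=
  sInf {t | ∃ v : I → ℝ, v ≠ 0 ∧ A *ᵥ v = t • v}

/-- Column-stacking vectorization `vec`: `vecM X (j, i) = X i j`. -/
def vecM {J : Type*} (X : Matrix J J ℝ) : J × J → ℝ := fun p => X p.2 p.1

/-- `Ψ` is an orthonormal basis matrix for the space of vectorized symmetric matrices:
`ΨᵀΨ = I` and `ΨΨᵀ` is the orthogonal projection onto vectorized symmetric matrices. -/
def IsSymBasis {J K : Type*} [Fintype J] [Fintype K] [DecidableEq K]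
    (Ψ : Matrix (J × J) K ℝ) : Prop :=
  Ψᵀ * Ψ = 1 ∧ ∀ X : Matrix J J ℝ, Ψ *ᵥ (Ψᵀ *ᵥ vecM X) = vecM ((1/2 : ℝ) • (X + Xᵀ))

/-- Symmetric vectorization with respect to the basis matrix `Ψ`. -/
def svec {J K : Type*} [Fintype J] (Ψ : Matrix (J × J) K ℝ) (X : Matrix J J ℝ) : K → ℝ :=
  Ψᵀ *ᵥ vecM X

/-- Symmetric Kronecker product with respect to the basis matrices `Ψ₁, Ψ₂`. -/
def skron {J J' K K' : Type*} [Fintype J] [Fintype J']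
    (Ψ₁ : Matrix (J × J) K ℝ) (Ψ₂ : Matrix (J' × J') K' ℝ)
    (A B : Matrix J J' ℝ) : Matrix K K' ℝ :=
  (1/2 : ℝ) • (Ψ₁ᵀ * ((A ⊗ₖ B + B ⊗ₖ A) * Ψ₂))

/-- The positive semidefinite square root of a positive semidefinite matrix
(Mathlib's former `Matrix.PosSemidef.sqrt`, removed upstream; restored, specialised to ℝ,
the only scalar field used here). -/
def Matrix.PosSemidef.sqrt {n : Type*} [Fintype n] [DecidableEq n]
    {A : Matrix n n ℝ} (hA : A.PosSemidef) : Matrix n n ℝ :=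
  hA.1.eigenvectorUnitary.1 * diagonal ((RCLike.ofReal : ℝ → ℝ) ∘ Real.sqrt ∘ hA.1.eigenvalues) *
    (star hA.1.eigenvectorUnitary : Matrix n n ℝ)

/-- Positive semidefinite square root (junk value `0` off the PSD cone). -/
def psqrt {J : Type*} [Fintype J] [DecidableEq J] (A : Matrix J J ℝ) : Matrix J J ℝ :=
  @dite _ A.PosSemidef (Classical.dec _) (fun h => h.sqrt) (fun _ => 0)

/-- Condition number in spectral norm. -/
def condNum {J : Type*} [Fintype J] [DecidableEq J] (M : Matrix J J ℝ) : ℝ :=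
  specNorm M * specNorm M⁻¹

/-- Assumption A1: `W` is the Nesterov--Todd scaling point of a well-centered
primal-dual pair `(X, S)` that is `O(μ)`-close to a strictly complementary solution. -/
def A1 {n : ℕ} (μ L δ χ₁ : ℝ) (W X S Xs Ss : Matrix (Fin n) (Fin n) ℝ) : Prop :=
  X.PosDef ∧ S.PosDef ∧ Xs.PosSemidef ∧ Ss.PosSemidef ∧ Xs * Ss = 0 ∧
    (Xs + Ss - χ₁⁻¹ • (1 : Matrix (Fin n) (Fin n) ℝ)).PosSemidef ∧
    ((1 : Matrix (Fin n) (Fin n) ℝ) - (Xs + Ss)).PosSemidef ∧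
    W = psqrt X * (psqrt (psqrt X * S * psqrt X))⁻¹ * psqrt X ∧
    specNorm ((1/μ) • (psqrt X * S * psqrt X) - 1) ≤ δ ∧
    specNorm (X - Xs) ≤ L * μ ∧ specNorm (S - Ss) ≤ L

lemma Matrix.PosSemidef.sqrt_mul_self {n : Type*} [Fintype n] [DecidableEq n]
    {A : Matrix n n ℝ} (hA : A.PosSemidef) : hA.sqrt * hA.sqrt = A := by
  have hU : (star hA.1.eigenvectorUnitary : Matrix n n ℝ) * hA.1.eigenvectorUnitary.1 = 1 :=
    Unitary.coe_star_mul_self _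
  have hd : diagonal ((RCLike.ofReal : ℝ → ℝ) ∘ Real.sqrt ∘ hA.1.eigenvalues) *
      diagonal ((RCLike.ofReal : ℝ → ℝ) ∘ Real.sqrt ∘ hA.1.eigenvalues) =
      diagonal ((RCLike.ofReal : ℝ → ℝ) ∘ hA.1.eigenvalues) := by
    rw [diagonal_mul_diagonal]
    congr 1; funext i
    simp [Real.mul_self_sqrt (hA.eigenvalues_nonneg i)]
  conv_rhs => rw [hA.1.spectral_theorem, Unitary.conjStarAlgAut_apply]
  simp only [Matrix.PosSemidef.sqrt, Matrix.mul_assoc]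
  rw [← Matrix.mul_assoc _ hA.1.eigenvectorUnitary.1, hU, Matrix.one_mul, ← hd]
  simp only [Matrix.mul_assoc]

lemma Matrix.PosSemidef.posSemidef_sqrt {n : Type*} [Fintype n] [DecidableEq n]
    {A : Matrix n n ℝ} (hA : A.PosSemidef) : hA.sqrt.PosSemidef := by
  have hD : (diagonal ((RCLike.ofReal : ℝ → ℝ) ∘ Real.sqrt ∘ hA.1.eigenvalues)).PosSemidef := by
    rw [posSemidef_diagonal_iff]; intro i; simp [Real.sqrt_nonneg]
  have := hD.mul_mul_conjTranspose_same (hA.1.eigenvectorUnitary.1)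
  unfold Matrix.PosSemidef.sqrt
  convert this using 2
  rw [star_eq_conjTranspose]

set_option linter.unusedSectionVars false
set_option linter.unusedVariables false

namespace Stmt9Aux
open scoped Matrix.Norms.L2Operator

variable {m n : Type*} [Fintype m] [Fintype n] [DecidableEq m] [DecidableEq n]

lemma vnorm_eq (v : n → ℝ) : vnorm v = ‖(EuclideanSpace.equiv n ℝ).symm v‖ := by
  rw [EuclideanSpace.norm_eq, vnorm]
  congr 1
  refine Finset.sum_congr rfl fun i _ => ?_
  simp [Real.norm_eq_abs, sq_abs]

lemma vnorm_sq (v : n → ℝ) : vnorm v ^ 2 = v ⬝ᵥ v := by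
  rw [vnorm, Real.sq_sqrt (by positivity)]
  simp [dotProduct, sq]

lemma vnorm_nonneg (v : n → ℝ) : 0 ≤ vnorm v := Real.sqrt_nonneg _

lemma dot_le (v u : n → ℝ) : v ⬝ᵥ u ≤ vnorm v * vnorm u := by
  have h := real_inner_le_norm ((EuclideanSpace.equiv n ℝ).symm v) ((EuclideanSpace.equiv n ℝ).symm u)
  rw [← vnorm_eq, ← vnorm_eq] at h
  refine le_trans (le_of_eq ?_) h
  rw [EuclideanSpace.inner_eq_star_dotProduct]
  simp [dotProduct, mul_comm]

lemma mulVec_vnorm_le (A : Matrix m n ℝ) (v : n → ℝ) :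
    vnorm (A *ᵥ v) ≤ ‖A‖ * vnorm v := by
  calc vnorm (A *ᵥ v) = ‖(EuclideanSpace.equiv m ℝ).symm (A *ᵥ v)‖ := vnorm_eq _
    _ ≤ ‖A‖ * ‖(EuclideanSpace.equiv n ℝ).symm v‖ := Matrix.l2_opNorm_mulVec A _
    _ = ‖A‖ * vnorm v := by rw [← vnorm_eq]

end Stmt9Aux

namespace Stmt9Aux
open scoped Matrix.Norms.L2Operator
variable {m n : Type*} [Fintype m] [Fintype n] [DecidableEq m] [DecidableEq n]

lemma vnorm_smul (c : ℝ) (v : n → ℝ) : vnorm (c • v) = |c| * vnorm v := by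
  have : ∑ i, (c • v) i ^ 2 = c ^ 2 * ∑ i, v i ^ 2 := by
    rw [Finset.mul_sum]
    exact Finset.sum_congr rfl fun i _ => by simp [mul_pow]
  rw [vnorm, this, Real.sqrt_mul (sq_nonneg c), Real.sqrt_sq_eq_abs, vnorm]

lemma opNorm_le_of (A : Matrix m n ℝ) {c : ℝ} (hc : 0 ≤ c)
    (h : ∀ v : n → ℝ, vnorm (A *ᵥ v) ≤ c * vnorm v) : ‖A‖ ≤ c := by
  rw [Matrix.l2_opNorm_def]
  refine ContinuousLinearMap.opNorm_le_bound _ hc fun x => ?_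
  have h2 := h ((EuclideanSpace.equiv n ℝ) x)
  rw [vnorm_eq, vnorm_eq] at h2
  simp [Matrix.toEuclideanLin_apply] at h2 ⊢
  exact h2

lemma spec_eq (A : Matrix m n ℝ) : specNorm A = ‖A‖ := by
  have hmem : ∀ c ∈ {c | ∃ v : n → ℝ, vnorm v ≤ 1 ∧ c = vnorm (A *ᵥ v)}, c ≤ ‖A‖ := by
    rintro c ⟨v, hv, rfl⟩
    calc vnorm (A *ᵥ v) ≤ ‖A‖ * vnorm v := mulVec_vnorm_le A v
      _ ≤ ‖A‖ * 1 := by nlinarith [norm_nonneg A, vnorm_nonneg v]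
      _ = ‖A‖ := mul_one _
  have hbdd : BddAbove {c | ∃ v : n → ℝ, vnorm v ≤ 1 ∧ c = vnorm (A *ᵥ v)} := ⟨‖A‖, hmem⟩
  refine le_antisymm (Real.sSup_le hmem (norm_nonneg A)) ?_
  have h0 : (0:ℝ) ∈ {c | ∃ v : n → ℝ, vnorm v ≤ 1 ∧ c = vnorm (A *ᵥ v)} := by
    refine ⟨0, by simp [vnorm], by simp [vnorm, Matrix.mulVec_zero]⟩
  have hs0 : 0 ≤ specNorm A := le_csSup hbdd h0
  refine opNorm_le_of A hs0 fun v => ?_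
  rcases eq_or_ne (vnorm v) 0 with hv | hv
  · have hz : ∑ j, v j ^ 2 = 0 := by
      have := congrArg (· ^ 2) hv
      simpa [vnorm, Real.sq_sqrt (by positivity : (0:ℝ) ≤ ∑ j, v j ^ 2)] using this
    have hv0 : v = 0 := by
      funext i
      have := (Finset.sum_eq_zero_iff_of_nonneg (fun j _ => sq_nonneg (v j))).mp hz i (Finset.mem_univ i)
      exact pow_eq_zero_iff (n := 2) (by norm_num) |>.mp this
    simp [hv0, Matrix.mulVec_zero, vnorm, hs0]
  · have hvpos : 0 < vnorm v := lt_of_le_of_ne (vnorm_nonneg v) (Ne.symm hv)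
    set u : n → ℝ := (vnorm v)⁻¹ • v with hu
    have hvu : vnorm u = 1 := by
      rw [hu, vnorm_smul, abs_of_pos (by positivity)]
      field_simp
    have hle : vnorm (A *ᵥ u) ≤ specNorm A := le_csSup hbdd ⟨u, le_of_eq hvu, rfl⟩
    have hsc : vnorm (A *ᵥ v) = vnorm v * vnorm (A *ᵥ u) := by
      rw [hu, Matrix.mulVec_smul, vnorm_smul, abs_of_pos (by positivity)]
      field_simp
    rw [hsc]
    nlinarith [vnorm_nonneg (A *ᵥ u)]

end Stmt9Aux

namespace Stmt9Aux
open scoped Matrix.Norms.L2Operator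
variable {m n l : Type*} [Fintype m] [Fintype n] [Fintype l] [DecidableEq m] [DecidableEq n] [DecidableEq l]

lemma norm_one_le : ‖(1 : Matrix n n ℝ)‖ ≤ 1 := by
  have h : ‖(1 : Matrix n n ℝ)‖ * ‖(1 : Matrix n n ℝ)‖ = ‖(1 : Matrix n n ℝ)‖ := by
    conv_rhs => rw [show (1 : Matrix n n ℝ) = (1 : Matrix n n ℝ)ᴴ * 1 by simp]
    rw [Matrix.l2_opNorm_conjTranspose_mul_self]
  nlinarith [norm_nonneg (1 : Matrix n n ℝ)]

lemma norm_orth_le {R : Matrix m n ℝ} (h : Rᴴ * R = 1) : ‖R‖ ≤ 1 := by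
  have h2 : ‖R‖ * ‖R‖ ≤ 1 := by
    rw [← Matrix.l2_opNorm_conjTranspose_mul_self, h]
    exact norm_one_le
  nlinarith [norm_nonneg R]

lemma norm_sq_eq (A : Matrix m n ℝ) : ‖A‖ ^ 2 = ‖Aᴴ * A‖ := by
  rw [Matrix.l2_opNorm_conjTranspose_mul_self, sq]

lemma dot_self_mulVec (C : Matrix m n ℝ) (v : n → ℝ) :
    (C *ᵥ v) ⬝ᵥ (C *ᵥ v) = v ⬝ᵥ ((Cᴴ * C) *ᵥ v) := by
  rw [← Matrix.mulVec_mulVec, Matrix.dotProduct_mulVec v, Matrix.conjTranspose_eq_transpose_of_trivial,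
    Matrix.vecMul_transpose]

lemma eval_det_smul_one_add (M : Matrix n n ℝ) (t : ℝ) :
    ((-M).charpoly).eval t = (t • (1 : Matrix n n ℝ) + M).det := by
  rw [Matrix.charpoly, _root_.eval_det, Matrix.matPolyEquiv_charmatrix]
  simp only [Polynomial.eval_sub, Polynomial.eval_X, Polynomial.eval_C]
  congr 1
  rw [sub_neg_eq_add]
  congr 1
  ext i j
  by_cases h : i = j <;>
    simp [Matrix.scalar_apply, h, Matrix.one_apply, Matrix.diagonal, Matrix.smul_apply]

end Stmt9Aux

namespace Stmt9Aux
open scoped Matrix.Norms.L2Operator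
variable {m n l : Type*} [Fintype m] [Fintype n] [Fintype l] [DecidableEq m] [DecidableEq n] [DecidableEq l]

lemma le_of_sq_le_sq' {a b : ℝ} (ha : 0 ≤ a) (hb : 0 ≤ b) (h : a ^ 2 ≤ b ^ 2) : a ≤ b := by
  nlinarith [sq_nonneg (a - b), sq_nonneg (a + b)]

lemma vnorm_pos {v : n → ℝ} (hv : v ≠ 0) : 0 < vnorm v := by
  rcases lt_or_eq_of_le (vnorm_nonneg v) with h | h
  · exact h
  · exfalso
    have hz : ∑ j, v j ^ 2 = 0 := by
      have := congrArg (· ^ 2) h.symm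
      simpa [vnorm, Real.sq_sqrt (by positivity : (0:ℝ) ≤ ∑ j, v j ^ 2)] using this
    refine hv (funext fun i => ?_)
    have := (Finset.sum_eq_zero_iff_of_nonneg (fun j _ => sq_nonneg (v j))).mp hz i (Finset.mem_univ i)
    exact pow_eq_zero_iff (n := 2) (by norm_num) |>.mp this

lemma dot_self_eq (v : n → ℝ) : v ⬝ᵥ v = vnorm v ^ 2 := (vnorm_sq v).symm

lemma one_add_psd_posDef {G : Matrix n n ℝ} (hG : G.PosSemidef) :
    ((1 : Matrix n n ℝ) + G).PosDef := by
  refine Matrix.PosDef.of_dotProduct_mulVec_pos (Matrix.isHermitian_one.add hG.1) fun ⦃x⦄ hx => ?_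
  have h1 := hG.dotProduct_mulVec_nonneg x
  have hst : star x = x := by funext i; simp
  rw [hst] at h1 ⊢
  rw [Matrix.add_mulVec, Matrix.one_mulVec, dotProduct_add, dot_self_eq]
  have := vnorm_pos hx
  nlinarith

lemma inv_one_add_psd_norm_le {G : Matrix n n ℝ} (hG : G.PosSemidef) :
    ‖((1 : Matrix n n ℝ) + G)⁻¹‖ ≤ 1 := by
  have hpd := one_add_psd_posDef hG
  have hu : IsUnit ((1 : Matrix n n ℝ) + G).det := (Matrix.isUnit_iff_isUnit_det _).mp hpd.isUnit
  refine opNorm_le_of _ zero_le_one fun v => ?_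
  rw [one_mul]
  set u := ((1 : Matrix n n ℝ) + G)⁻¹ *ᵥ v with hu'
  have hvu : ((1 : Matrix n n ℝ) + G) *ᵥ u = v := by
    rw [hu', Matrix.mulVec_mulVec, Matrix.mul_nonsing_inv _ hu, Matrix.one_mulVec]
  have h1 : u ⬝ᵥ v = vnorm u ^ 2 + u ⬝ᵥ (G *ᵥ u) := by
    rw [← hvu, Matrix.add_mulVec, Matrix.one_mulVec, dotProduct_add, dot_self_eq]
  have h2 : 0 ≤ u ⬝ᵥ (G *ᵥ u) := by
    have := hG.dotProduct_mulVec_nonneg u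
    have hst : star u = u := by funext i; simp
    rwa [hst] at this
  have h3 : u ⬝ᵥ v ≤ vnorm u * vnorm v := dot_le u v
  nlinarith [vnorm_nonneg u, vnorm_nonneg v]

lemma sing_transfer {A : Matrix n n ℝ} {B : Matrix m n ℝ} {N : Matrix n l ℝ}
    (hB : Bᴴ * B = 1 - Aᴴ * A) (hN : N * Nᴴ = 1 - A * Aᴴ) : ‖B‖ ≤ ‖N‖ := by
  set c := ‖N‖ ^ 2 with hc
  -- quadratic form bound for Aᴴ
  have claim1 : ∀ w : n → ℝ, (1 - c) * vnorm w ^ 2 ≤ vnorm (Aᴴ *ᵥ w) ^ 2 := by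
    intro w
    have e1 : vnorm (Aᴴ *ᵥ w) ^ 2 = vnorm w ^ 2 - vnorm (Nᴴ *ᵥ w) ^ 2 := by
      have hN' : A * Aᴴ = 1 - N * Nᴴ := by rw [hN]; abel
      rw [← dot_self_eq, dot_self_mulVec, Matrix.conjTranspose_conjTranspose, hN',
        Matrix.sub_mulVec, dotProduct_sub, Matrix.one_mulVec, dot_self_eq]
      congr 1
      rw [← dot_self_eq, dot_self_mulVec, Matrix.conjTranspose_conjTranspose]
    have e2 : vnorm (Nᴴ *ᵥ w) ≤ ‖N‖ * vnorm w := by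
      calc vnorm (Nᴴ *ᵥ w) ≤ ‖Nᴴ‖ * vnorm w := mulVec_vnorm_le _ w
        _ = ‖N‖ * vnorm w := by rw [Matrix.l2_opNorm_conjTranspose]
    have := vnorm_nonneg (Nᴴ *ᵥ w)
    have := vnorm_nonneg w
    nlinarith
  -- goal via pointwise bound on B
  have main : ∀ v : n → ℝ, vnorm (B *ᵥ v) ≤ ‖N‖ * vnorm v := by
    intro v
    have eB : vnorm (B *ᵥ v) ^ 2 = vnorm v ^ 2 - vnorm (A *ᵥ v) ^ 2 := by
      rw [← dot_self_eq, dot_self_mulVec, hB, Matrix.sub_mulVec, dotProduct_sub,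
        Matrix.one_mulVec, dot_self_eq]
      congr 1
      rw [← dot_self_eq, dot_self_mulVec]
    have hAv : (1 - c) * vnorm v ^ 2 ≤ vnorm (A *ᵥ v) ^ 2 := by
      rcases le_or_gt 1 c with hc1 | hc1
      · nlinarith [sq_nonneg (vnorm (A *ᵥ v)), sq_nonneg (vnorm v)]
      · -- c < 1, γ := sqrt (1 - c) > 0
        set γ := Real.sqrt (1 - c) with hγ
        have hγpos : 0 < γ := Real.sqrt_pos.mpr (by linarith)
        have hγsq : γ ^ 2 = 1 - c := Real.sq_sqrt (by linarith)
        have hlow : ∀ w : n → ℝ, γ * vnorm w ≤ vnorm (Aᴴ *ᵥ w) := by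
          intro w
          have := claim1 w
          rw [← hγsq] at this
          nlinarith [vnorm_nonneg w, vnorm_nonneg (Aᴴ *ᵥ w), hγpos.le]
        have hdet : A.det ≠ 0 := by
          intro h0
          have h0t : Aᴴ.det = 0 := by
            rw [Matrix.conjTranspose_eq_transpose_of_trivial, Matrix.det_transpose]; exact h0
          obtain ⟨w, hw0, hww⟩ := Matrix.exists_mulVec_eq_zero_iff.mpr h0t
          have := hlow w
          rw [hww] at this
          have h1 := vnorm_pos hw0
          have h2 : vnorm (0 : n → ℝ) = 0 := by simp [vnorm]
          rw [h2] at this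
          nlinarith
        have hdetu : IsUnit A.det := isUnit_iff_ne_zero.mpr hdet
        have hdetut : IsUnit Aᴴ.det := by
          rwa [Matrix.conjTranspose_eq_transpose_of_trivial, Matrix.det_transpose]
        -- ‖(Aᴴ)⁻¹‖ ≤ γ⁻¹
        have hinv : ‖(Aᴴ)⁻¹‖ ≤ γ⁻¹ := by
          refine opNorm_le_of _ (by positivity) fun w => ?_
          have hw : Aᴴ *ᵥ ((Aᴴ)⁻¹ *ᵥ w) = w := by
            rw [Matrix.mulVec_mulVec, Matrix.mul_nonsing_inv _ hdetut, Matrix.one_mulVec]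
          have hlw := hlow ((Aᴴ)⁻¹ *ᵥ w)
          rw [hw] at hlw
          calc vnorm ((Aᴴ)⁻¹ *ᵥ w) = γ⁻¹ * (γ * vnorm ((Aᴴ)⁻¹ *ᵥ w)) := by
                field_simp
            _ ≤ γ⁻¹ * vnorm w := by
                have h := inv_nonneg.mpr hγpos.le
                nlinarith
        have hAinv : ‖A⁻¹‖ ≤ γ⁻¹ := by
          have : ‖A⁻¹‖ = ‖(Aᴴ)⁻¹‖ := by
            rw [← Matrix.conjTranspose_nonsing_inv, Matrix.l2_opNorm_conjTranspose]
          rw [this]; exact hinv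
        have hlowA : γ * vnorm v ≤ vnorm (A *ᵥ v) := by
          have hv : A⁻¹ *ᵥ (A *ᵥ v) = v := by
            rw [Matrix.mulVec_mulVec, Matrix.nonsing_inv_mul _ hdetu, Matrix.one_mulVec]
          have h1 : vnorm v ≤ γ⁻¹ * vnorm (A *ᵥ v) := by
            calc vnorm v = vnorm (A⁻¹ *ᵥ (A *ᵥ v)) := by rw [hv]
              _ ≤ ‖A⁻¹‖ * vnorm (A *ᵥ v) := mulVec_vnorm_le _ _
              _ ≤ γ⁻¹ * vnorm (A *ᵥ v) := by
                  nlinarith [vnorm_nonneg (A *ᵥ v), norm_nonneg A⁻¹]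
          have h2 : γ * vnorm v ≤ γ * (γ⁻¹ * vnorm (A *ᵥ v)) :=
            mul_le_mul_of_nonneg_left h1 hγpos.le
          have h3 : γ * (γ⁻¹ * vnorm (A *ᵥ v)) = vnorm (A *ᵥ v) := by
            field_simp
          linarith
        rw [← hγsq]
        have hsq := mul_le_mul hlowA hlowA (mul_nonneg hγpos.le (vnorm_nonneg v)) (vnorm_nonneg (A *ᵥ v))
        nlinarith [vnorm_nonneg v, vnorm_nonneg (A *ᵥ v), hγpos.le]
    refine le_of_sq_le_sq' (vnorm_nonneg _) (mul_nonneg (norm_nonneg N) (vnorm_nonneg v)) ?_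
    have : (‖N‖ * vnorm v) ^ 2 = c * vnorm v ^ 2 := by rw [hc]; ring
    nlinarith [vnorm_nonneg v]
  exact opNorm_le_of _ (norm_nonneg N) main

end Stmt9Aux

namespace Stmt9Aux
open scoped Matrix.Norms.L2Operator

set_option maxHeartbeats 2000000 in
lemma key {ι κ κ' : Type*} [Fintype ι] [Fintype κ] [Fintype κ']
    [DecidableEq ι] [DecidableEq κ] [DecidableEq κ']
    (Q Qh : Matrix ι κ ℝ) (Qhp : Matrix ι κ' ℝ)
    (hQ : Qᴴ * Q = 1) (hQh : Qhᴴ * Qh = 1) (hsplit : Qh * Qhᴴ + Qhp * Qhpᴴ = 1) :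
    sInf {c | ∃ R : Matrix κ κ ℝ, Rᵀ * R = 1 ∧ c = specNorm (Q - Qh * R)} ≤
      Real.sqrt 2 * specNorm (Qᵀ * Qhp) := by
  set N := Qᴴ * Qhp with hNdef
  set M := Qhᴴ * Q with hMdef
  have hNspec : specNorm (Qᵀ * Qhp) = ‖N‖ := by
    rw [spec_eq, hNdef, Matrix.conjTranspose_eq_transpose_of_trivial]
  have hbdd : BddBelow {c | ∃ R : Matrix κ κ ℝ, Rᵀ * R = 1 ∧ c = specNorm (Q - Qh * R)} := by
    refine ⟨0, ?_⟩
    rintro c ⟨R, hR, rfl⟩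
    rw [spec_eq]; exact norm_nonneg _
  rw [hNspec]
  refine le_of_forall_pos_le_add fun ε hε => ?_
  obtain ⟨δ, hδIoo, hδroot⟩ : ∃ δ : ℝ, δ ∈ Set.Ioo 0 (min 1 (ε^2/8)) ∧
      ¬ ((-M).charpoly).IsRoot δ := by
    have hne : ((-M).charpoly) ≠ 0 := (Matrix.charpoly_monic _).ne_zero
    have hfin := Polynomial.finite_setOf_isRoot hne
    have hinf : (Set.Ioo (0:ℝ) (min 1 (ε^2/8))).Infinite :=
      Set.Ioo_infinite (by positivity)
    obtain ⟨δ, hδ⟩ := (hinf.diff hfin).nonempty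
    exact ⟨δ, hδ.1, hδ.2⟩
  obtain ⟨hδ0, hδlt⟩ := hδIoo
  have hδ1 : δ ≤ 1 := le_trans hδlt.le (min_le_left _ _)
  have hδε : 8 * δ ≤ ε^2 := by
    have := le_trans hδlt.le (min_le_right _ _); linarith
  set Mδ := δ • (1 : Matrix κ κ ℝ) + M with hMδdef
  have hdet : Mδ.det ≠ 0 := fun h =>
    hδroot (by rwa [Polynomial.IsRoot, eval_det_smul_one_add])
  have hdetu : IsUnit Mδ.det := isUnit_iff_ne_zero.mpr hdet
  have hdetuH : IsUnit Mδᴴ.det := by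
    rwa [Matrix.conjTranspose_eq_transpose_of_trivial, Matrix.det_transpose, isUnit_iff_ne_zero]
  have hH : (Mδᴴ * Mδ).PosSemidef := Matrix.posSemidef_conjTranspose_mul_self Mδ
  set G := hH.sqrt with hGdef
  have hGG : G * G = Mδᴴ * Mδ := hH.sqrt_mul_self
  have hGpsd := hH.posSemidef_sqrt
  have hGherm : Gᴴ = G := hGpsd.1
  have hGdet : IsUnit G.det := by
    refine isUnit_iff_ne_zero.mpr fun h0 => ?_
    have h2 : Mδᴴ.det * Mδ.det ≠ 0 := mul_ne_zero hdetuH.ne_zero hdet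
    apply h2
    rw [← Matrix.det_mul, ← hGG, Matrix.det_mul, h0, mul_zero]
  set R := Mδ * G⁻¹ with hRdef
  have hGinvH : (G⁻¹)ᴴ = G⁻¹ := by rw [Matrix.conjTranspose_nonsing_inv, hGherm]
  have hRH : Rᴴ = G⁻¹ * Mδᴴ := by rw [hRdef, Matrix.conjTranspose_mul, hGinvH]
  have hRorth : Rᴴ * R = 1 := by
    have h1 : Rᴴ * R = G⁻¹ * (Mδᴴ * (Mδ * G⁻¹)) := by
      rw [hRH, hRdef, Matrix.mul_assoc]
    rw [h1, ← Matrix.mul_assoc Mδᴴ Mδ G⁻¹, ← hGG, Matrix.mul_assoc G G G⁻¹,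
      Matrix.mul_nonsing_inv _ hGdet, Matrix.mul_one, Matrix.nonsing_inv_mul _ hGdet]
  have hRMδ : Rᴴ * Mδ = G := by
    rw [hRH, Matrix.mul_assoc, ← hGG, ← Matrix.mul_assoc, Matrix.nonsing_inv_mul _ hGdet,
      Matrix.one_mul]
  have hRM : Rᴴ * M = G - δ • Rᴴ := by
    have hM : M = Mδ - δ • 1 := by rw [hMδdef]; abel
    rw [hM, Matrix.mul_sub, hRMδ, Matrix.mul_smul, Matrix.mul_one]
  have hMR : Mᴴ * R = G - δ • R := by
    have h := congrArg Matrix.conjTranspose hRM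
    simp only [Matrix.conjTranspose_mul, Matrix.conjTranspose_sub, Matrix.conjTranspose_smul,
      Matrix.conjTranspose_conjTranspose, hGherm, star_trivial] at h
    exact h
  have hMH : Qᴴ * Qh = Mᴴ := by
    rw [hMdef, Matrix.conjTranspose_mul, Matrix.conjTranspose_conjTranspose]
  have hE : (Q - Qh * R)ᴴ * (Q - Qh * R) = (2:ℝ) • ((1 : Matrix κ κ ℝ) - G) + δ • (R + Rᴴ) := by
    have e : (Q - Qh * R)ᴴ * (Q - Qh * R)
        = Qᴴ * Q - (Qᴴ * Qh) * R - Rᴴ * (Qhᴴ * Q) + Rᴴ * (Qhᴴ * (Qh * R)) := by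
      simp only [Matrix.conjTranspose_sub, Matrix.conjTranspose_mul, Matrix.sub_mul,
        Matrix.mul_sub, Matrix.mul_assoc]
      abel
    have e4 : Rᴴ * (Qhᴴ * (Qh * R)) = Rᴴ * R := by
      rw [← Matrix.mul_assoc Qhᴴ, hQh, Matrix.one_mul]
    rw [e, e4, hQ, hMH, ← hMdef, hMR, hRM, hRorth]
    module
  -- norm bounds
  have hR2 : ‖R + Rᴴ‖ ≤ 2 := by
    calc ‖R + Rᴴ‖ ≤ ‖R‖ + ‖Rᴴ‖ := norm_add_le _ _
      _ = ‖R‖ + ‖R‖ := by rw [Matrix.l2_opNorm_conjTranspose]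
      _ ≤ 2 := by have := norm_orth_le hRorth; linarith
  have hnormE : ‖(Q - Qh * R)ᴴ * (Q - Qh * R)‖ ≤ 2 * ‖(1 : Matrix κ κ ℝ) - G‖ + 2 * δ := by
    rw [hE]
    calc ‖(2:ℝ) • ((1 : Matrix κ κ ℝ) - G) + δ • (R + Rᴴ)‖
        ≤ ‖(2:ℝ) • ((1 : Matrix κ κ ℝ) - G)‖ + ‖δ • (R + Rᴴ)‖ := norm_add_le _ _
      _ = 2 * ‖(1 : Matrix κ κ ℝ) - G‖ + δ * ‖R + Rᴴ‖ := by
          rw [norm_smul, norm_smul, Real.norm_eq_abs, Real.norm_eq_abs,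
            abs_of_nonneg hδ0.le, abs_of_nonneg (by norm_num : (0:ℝ) ≤ 2)]
      _ ≤ 2 * ‖(1 : Matrix κ κ ℝ) - G‖ + 2 * δ := by nlinarith [hδ0.le]
  have hG1 : ‖(1 : Matrix κ κ ℝ) - G‖ ≤ ‖(1 : Matrix κ κ ℝ) - G * G‖ := by
    have hpd := one_add_psd_posDef hGpsd
    have hu1 : IsUnit ((1 : Matrix κ κ ℝ) + G).det :=
      (Matrix.isUnit_iff_isUnit_det _).mp hpd.isUnit
    have hid : ((1 : Matrix κ κ ℝ) - G) * (1 + G) = 1 - G * G := by noncomm_ring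
    have hid2 : (1 : Matrix κ κ ℝ) - G = (1 - G * G) * (1 + G)⁻¹ := by
      rw [← hid, Matrix.mul_assoc, Matrix.mul_nonsing_inv _ hu1, Matrix.mul_one]
    rw [hid2]
    calc ‖((1 : Matrix κ κ ℝ) - G * G) * (1 + G)⁻¹‖
        ≤ ‖(1 : Matrix κ κ ℝ) - G * G‖ * ‖((1 : Matrix κ κ ℝ) + G)⁻¹‖ := Matrix.l2_opNorm_mul _ _
      _ ≤ ‖(1 : Matrix κ κ ℝ) - G * G‖ * 1 := by
          exact mul_le_mul_of_nonneg_left (inv_one_add_psd_norm_le hGpsd) (norm_nonneg _)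
      _ = ‖(1 : Matrix κ κ ℝ) - G * G‖ := mul_one _
  have hMle : ‖M‖ ≤ 1 := by
    calc ‖M‖ = ‖Qhᴴ * Q‖ := by rw [hMdef]
      _ ≤ ‖Qhᴴ‖ * ‖Q‖ := Matrix.l2_opNorm_mul _ _
      _ ≤ 1 := by
          rw [Matrix.l2_opNorm_conjTranspose]
          exact mul_le_one₀ (norm_orth_le hQh) (norm_nonneg _) (norm_orth_le hQ)
  have hNN : N * Nᴴ = (1:Matrix κ κ ℝ) - Mᴴ * M := by
    have h1 : Mᴴ * M = Qᴴ * ((Qh * Qhᴴ) * Q) := by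
      rw [hMdef, Matrix.conjTranspose_mul, Matrix.conjTranspose_conjTranspose,
        Matrix.mul_assoc, Matrix.mul_assoc]
    have h2 : N * Nᴴ = Qᴴ * ((Qhp * Qhpᴴ) * Q) := by
      rw [hNdef, Matrix.conjTranspose_mul, Matrix.conjTranspose_conjTranspose,
        Matrix.mul_assoc, Matrix.mul_assoc]
    have h3 : Qᴴ * ((Qh * Qhᴴ) * Q) + Qᴴ * ((Qhp * Qhpᴴ) * Q) = 1 := by
      rw [← Matrix.mul_add, ← Matrix.add_mul, hsplit, Matrix.one_mul, hQ]
    rw [h2, h1, eq_sub_iff_add_eq, add_comm]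
    exact h3
  have hNle : ‖(1:Matrix κ κ ℝ) - Mᴴ * M‖ ≤ ‖N‖ ^ 2 := by
    rw [← hNN]
    calc ‖N * Nᴴ‖ ≤ ‖N‖ * ‖Nᴴ‖ := Matrix.l2_opNorm_mul _ _
      _ = ‖N‖ ^ 2 := by rw [Matrix.l2_opNorm_conjTranspose, sq]
  have hHδle : ‖(1 : Matrix κ κ ℝ) - G * G‖ ≤ ‖N‖ ^ 2 + 2 * δ + δ ^ 2 := by
    rw [hGG]
    have hexp : (1:Matrix κ κ ℝ) - Mδᴴ * Mδ
        = ((1:Matrix κ κ ℝ) - Mᴴ * M) - δ • Mᴴ - δ • M - (δ^2) • (1:Matrix κ κ ℝ) := by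
      rw [hMδdef]
      simp only [Matrix.conjTranspose_add, Matrix.conjTranspose_smul, Matrix.conjTranspose_one,
        star_trivial, Matrix.add_mul, Matrix.mul_add, Matrix.smul_mul, Matrix.mul_smul,
        Matrix.one_mul, Matrix.mul_one, smul_smul]
      module
    rw [hexp]
    have t1 : ‖(((1:Matrix κ κ ℝ) - Mᴴ * M) - δ • Mᴴ - δ • M) - (δ^2) • (1:Matrix κ κ ℝ)‖
        ≤ ‖((1:Matrix κ κ ℝ) - Mᴴ * M) - δ • Mᴴ - δ • M‖ + ‖(δ^2) • (1:Matrix κ κ ℝ)‖ :=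
      norm_sub_le _ _
    have t2 : ‖((1:Matrix κ κ ℝ) - Mᴴ * M) - δ • Mᴴ - δ • M‖
        ≤ ‖((1:Matrix κ κ ℝ) - Mᴴ * M) - δ • Mᴴ‖ + ‖δ • M‖ := norm_sub_le _ _
    have t3 : ‖((1:Matrix κ κ ℝ) - Mᴴ * M) - δ • Mᴴ‖
        ≤ ‖(1:Matrix κ κ ℝ) - Mᴴ * M‖ + ‖δ • Mᴴ‖ := norm_sub_le _ _
    have n1 : ‖δ • M‖ ≤ δ := by
      rw [norm_smul, Real.norm_eq_abs, abs_of_nonneg hδ0.le]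
      nlinarith [norm_nonneg M, hδ0.le]
    have n2 : ‖δ • Mᴴ‖ ≤ δ := by
      rw [norm_smul, Real.norm_eq_abs, abs_of_nonneg hδ0.le, Matrix.l2_opNorm_conjTranspose]
      nlinarith [norm_nonneg M, hδ0.le]
    have n3 : ‖(δ^2) • (1:Matrix κ κ ℝ)‖ ≤ δ^2 := by
      rw [norm_smul, Real.norm_eq_abs, abs_of_nonneg (sq_nonneg δ)]
      nlinarith [norm_one_le (n := κ), sq_nonneg δ]
    linarith
  -- assemble
  have hc2 : ‖Q - Qh * R‖ ^ 2 ≤ 2 * ‖N‖ ^ 2 + ε ^ 2 := by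
    rw [norm_sq_eq]
    have h1 : ‖(1 : Matrix κ κ ℝ) - G‖ ≤ ‖N‖ ^ 2 + 2 * δ + δ ^ 2 := le_trans hG1 hHδle
    have h2 : ‖(Q - Qh * R)ᴴ * (Q - Qh * R)‖ ≤ 2 * (‖N‖ ^ 2 + 2 * δ + δ ^ 2) + 2 * δ := by
      nlinarith [hnormE]
    nlinarith [hδ0.le, hδ1, hδε]
  have hcle : ‖Q - Qh * R‖ ≤ Real.sqrt 2 * ‖N‖ + ε := by
    refine le_of_sq_le_sq' (norm_nonneg _)
      (add_nonneg (mul_nonneg (Real.sqrt_nonneg 2) (norm_nonneg N)) hε.le) ?_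
    have h2 : (Real.sqrt 2 * ‖N‖ + ε) ^ 2
        = 2 * ‖N‖ ^ 2 + 2 * Real.sqrt 2 * ‖N‖ * ε + ε ^ 2 := by
      rw [add_sq, mul_pow, Real.sq_sqrt (by norm_num : (0:ℝ) ≤ 2)]; ring
    have h3 : 0 ≤ 2 * Real.sqrt 2 * ‖N‖ * ε :=
      mul_nonneg (mul_nonneg (mul_nonneg (by norm_num) (Real.sqrt_nonneg 2)) (norm_nonneg N)) hε.le
    linarith
  have hmem : specNorm (Q - Qh * R) ∈
      {c | ∃ R : Matrix κ κ ℝ, Rᵀ * R = 1 ∧ c = specNorm (Q - Qh * R)} := by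
    refine ⟨R, ?_, rfl⟩
    rw [← Matrix.conjTranspose_eq_transpose_of_trivial]
    exact hRorth
  have := csInf_le hbdd hmem
  rw [spec_eq] at this
  linarith

end Stmt9Aux

namespace Stmt9Aux
open scoped Matrix.Norms.L2Operator

lemma prod_split {ι α β γ : Type*} [Fintype ι] [Fintype α] [Fintype β] [Fintype γ]
    [DecidableEq ι] [DecidableEq α]
    (U : Matrix ι α ℝ) (V : Matrix ι β ℝ) (W : Matrix ι γ ℝ)
    (hU : Uᴴ * U = 1) (hVW : V * Vᴴ + W * Wᴴ = 1) :
    (Uᴴ * W) * (Uᴴ * W)ᴴ = 1 - (Uᴴ * V) * (Uᴴ * V)ᴴ := by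
  have h1 : (Uᴴ * W) * (Uᴴ * W)ᴴ = Uᴴ * ((W * Wᴴ) * U) := by
    rw [Matrix.conjTranspose_mul, Matrix.conjTranspose_conjTranspose,
      Matrix.mul_assoc, Matrix.mul_assoc]
  have h2 : (Uᴴ * V) * (Uᴴ * V)ᴴ = Uᴴ * ((V * Vᴴ) * U) := by
    rw [Matrix.conjTranspose_mul, Matrix.conjTranspose_conjTranspose,
      Matrix.mul_assoc, Matrix.mul_assoc]
  have h3 : Uᴴ * ((V * Vᴴ) * U) + Uᴴ * ((W * Wᴴ) * U) = 1 := by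
    rw [← Matrix.mul_add, ← Matrix.add_mul, hVW, Matrix.one_mul, hU]
  rw [h1, h2, eq_sub_iff_add_eq, add_comm]
  exact h3

end Stmt9Aux


open Stmt9Aux in
/-- Lemma 4.8, distance between orthogonal matrices:
both Procrustes distances are bounded by `√2·‖QᵀQ̂⊥‖`. -/
theorem stmt9 {n r : ℕ}
    (Q Qh : Matrix (Fin n) (Fin r) ℝ) (Qp Qhp : Matrix (Fin n) (Fin (n - r)) ℝ)
    -- `[Q, Q⊥]` is orthogonal
    (hQQ : Qᵀ * Q = 1) (hPP : Qpᵀ * Qp = 1) (hQP : Qᵀ * Qp = 0)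
    (hfull : Q * Qᵀ + Qp * Qpᵀ = 1)
    -- `[Q̂, Q̂⊥]` is orthogonal
    (hQQh : Qhᵀ * Qh = 1) (hPPh : Qhpᵀ * Qhp = 1) (hQPh : Qhᵀ * Qhp = 0)
    (hfullh : Qh * Qhᵀ + Qhp * Qhpᵀ = 1) :
    sInf {c | ∃ R : Matrix (Fin r) (Fin r) ℝ, Rᵀ * R = 1 ∧ c = specNorm (Q - Qh * R)} ≤
        Real.sqrt 2 * specNorm (Qᵀ * Qhp) ∧
      sInf {c | ∃ Rp : Matrix (Fin (n - r)) (Fin (n - r)) ℝ,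
          Rpᵀ * Rp = 1 ∧ c = specNorm (Qp - Qhp * Rp)} ≤
        Real.sqrt 2 * specNorm (Qᵀ * Qhp) := by
  open scoped Matrix.Norms.L2Operator in
  have hQQ' : Qᴴ * Q = 1 := by rwa [Matrix.conjTranspose_eq_transpose_of_trivial]
  have hPP' : Qpᴴ * Qp = 1 := by rwa [Matrix.conjTranspose_eq_transpose_of_trivial]
  have hQQh' : Qhᴴ * Qh = 1 := by rwa [Matrix.conjTranspose_eq_transpose_of_trivial]
  have hPPh' : Qhpᴴ * Qhp = 1 := by rwa [Matrix.conjTranspose_eq_transpose_of_trivial]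
  have hfull' : Q * Qᴴ + Qp * Qpᴴ = 1 := by
    rwa [Matrix.conjTranspose_eq_transpose_of_trivial,
      Matrix.conjTranspose_eq_transpose_of_trivial]
  have hfullh' : Qh * Qhᴴ + Qhp * Qhpᴴ = 1 := by
    rwa [Matrix.conjTranspose_eq_transpose_of_trivial,
      Matrix.conjTranspose_eq_transpose_of_trivial]
  constructor
  · exact key Q Qh Qhp hQQ' hQQh' hfullh'
  · have h1 := key Qp Qhp Qh hPP' hPPh' (by rw [add_comm]; exact hfullh')
    refine le_trans h1 ?_
    have hB : (Qpᴴ * Qh)ᴴ * (Qpᴴ * Qh) = 1 - (Qᴴ * Qh)ᴴ * (Qᴴ * Qh) := by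
      have h := prod_split Qh Q Qp hQQh' hfull'
      calc (Qpᴴ * Qh)ᴴ * (Qpᴴ * Qh) = (Qhᴴ * Qp) * (Qhᴴ * Qp)ᴴ := by
            rw [Matrix.conjTranspose_mul, Matrix.conjTranspose_conjTranspose,
              Matrix.conjTranspose_mul, Matrix.conjTranspose_conjTranspose]
        _ = 1 - (Qhᴴ * Q) * (Qhᴴ * Q)ᴴ := h
        _ = 1 - (Qᴴ * Qh)ᴴ * (Qᴴ * Qh) := by
            rw [Matrix.conjTranspose_mul, Matrix.conjTranspose_conjTranspose,
              Matrix.conjTranspose_mul, Matrix.conjTranspose_conjTranspose]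
    have hN : (Qᴴ * Qhp) * (Qᴴ * Qhp)ᴴ = 1 - (Qᴴ * Qh) * (Qᴴ * Qh)ᴴ :=
      prod_split Q Qh Qhp hQQ' hfullh'
    have htr := sing_transfer hB hN
    have e1 : specNorm (Qpᵀ * Qh) = ‖Qpᴴ * Qh‖ := by
      rw [spec_eq, Matrix.conjTranspose_eq_transpose_of_trivial]
    have e2 : specNorm (Qᵀ * Qhp) = ‖Qᴴ * Qhp‖ := by
      rw [spec_eq, Matrix.conjTranspose_eq_transpose_of_trivial]
    rw [e1, e2]
    exact mul_le_mul_of_nonneg_left htr (Real.sqrt_nonneg 2)
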